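/- arXiv:2211.16321 — 2 statements merged into one kernel-verified Lean document; each statement's English description precedes it below -/
import Mathlib

section
/- Morrey norms under volume-preserving bi-Lipschitz maps (Lemma 3.4): Let n ≥ 1, 1 < q ≤ p < ∞, and let X : ℝⁿ → ℝⁿ be a bijection that preserves Lebesgue measure (the pushforward of Lebesgue measure under X equals Lebesgue measure) and such that, for some fixed γ ≥ 1, both X and X⁻¹ are γ-Lipschitz, i.e. |X^{±1}(x₀) − X^{±1}(y₀)| ≤ γ|x₀ − y₀| for all x₀, y₀ ∈ ℝⁿ. Then for every u ∈ M_q^p(ℝⁿ) one has u ∘ X ∈ M_q^p(ℝⁿ) and γ^{−(n/q − n/p)} ‖u‖_{M_q^p} ≤ ‖u ∘ X‖_{M_q^p} ≤ γ^{n/q − n/p} ‖u‖_{M_q^p}. -/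
open MeasureTheory Metric Set ENNReal

/-- The Morrey norm: `sup_{x₀, R>0} R^{n/p - n/q} (∫_{B(x₀,R)} |u|^q)^{1/q}`. -/
noncomputable def morreyNorm (n : ℕ) (p q : ℝ) {E : Type*} [NormedAddCommGroup E]
    (u : EuclideanSpace ℝ (Fin n) → E) : ℝ≥0∞ :=
  ⨆ (x₀ : EuclideanSpace ℝ (Fin n)) (R : ℝ) (_ : 0 < R),
    ENNReal.ofReal (R ^ ((n : ℝ) / p - (n : ℝ) / q)) *
      (∫⁻ y in closedBall x₀ R, (‖u y‖₊ : ℝ≥0∞) ^ q) ^ (1 / q)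

/-- Membership in the Morrey space `M_q^p(ℝⁿ)`. -/
def MemMorrey (n : ℕ) (p q : ℝ) {E : Type*} [NormedAddCommGroup E]
    (u : EuclideanSpace ℝ (Fin n) → E) : Prop :=
  AEStronglyMeasurable u (volume : Measure (EuclideanSpace ℝ (Fin n))) ∧
    morreyNorm n p q u < ⊤

open NNReal in
lemma morrey_comp_aux (n : ℕ) (p q : ℝ) (hq : 1 < q) (hqp : q ≤ p) (hp : 0 < p)
    (γ : ℝ≥0) (hγ : 1 ≤ γ)
    (X : EuclideanSpace ℝ (Fin n) → EuclideanSpace ℝ (Fin n))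
    (hmp : MeasurePreserving X (volume : Measure (EuclideanSpace ℝ (Fin n))) volume)
    (hemb : MeasurableEmbedding X)
    (hlip : LipschitzWith γ X)
    (u : EuclideanSpace ℝ (Fin n) → ℝ) :
    morreyNorm n p q (u ∘ X) ≤
      ENNReal.ofReal ((γ : ℝ) ^ ((n : ℝ) / q - (n : ℝ) / p)) * morreyNorm n p q u := by
  have hγ0 : (0 : ℝ) < γ := lt_of_lt_of_le one_pos hγ
  set α : ℝ := (n : ℝ) / q - (n : ℝ) / p with hα
  set β : ℝ := (n : ℝ) / p - (n : ℝ) / q with hβ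
  refine iSup_le fun x₀ => iSup_le fun R => iSup_le fun hR => ?_
  have hkey : (∫⁻ y in closedBall x₀ R, (‖(u ∘ X) y‖₊ : ℝ≥0∞) ^ q)
      ≤ ∫⁻ y in closedBall (X x₀) (γ * R), (‖u y‖₊ : ℝ≥0∞) ^ q := by
    have h1 : (∫⁻ y in closedBall x₀ R, (‖(u ∘ X) y‖₊ : ℝ≥0∞) ^ q)
        = ∫⁻ y in X '' closedBall x₀ R, (‖u y‖₊ : ℝ≥0∞) ^ q :=
      hmp.setLIntegral_comp_emb hemb (fun y => (‖u y‖₊ : ℝ≥0∞) ^ q) _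
    rw [h1]
    refine lintegral_mono_set ?_
    rintro _ ⟨y, hy, rfl⟩
    rw [mem_closedBall] at hy ⊢
    calc dist (X y) (X x₀) ≤ γ * dist y x₀ := hlip.dist_le_mul y x₀
      _ ≤ γ * R := by exact mul_le_mul_of_nonneg_left hy hγ0.le
  have hRpos : 0 < (γ : ℝ) * R := mul_pos hγ0 hR
  have hRβ : (R : ℝ) ^ β = (γ : ℝ) ^ α * ((γ : ℝ) * R) ^ β := by
    rw [Real.mul_rpow hγ0.le hR.le, ← mul_assoc, ← Real.rpow_add hγ0]
    simp [hα, hβ]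
  calc ENNReal.ofReal (R ^ β) *
      (∫⁻ y in closedBall x₀ R, (‖(u ∘ X) y‖₊ : ℝ≥0∞) ^ q) ^ (1 / q)
      ≤ ENNReal.ofReal (R ^ β) *
        (∫⁻ y in closedBall (X x₀) (γ * R), (‖u y‖₊ : ℝ≥0∞) ^ q) ^ (1 / q) := by
        exact mul_le_mul_right (ENNReal.rpow_le_rpow hkey (by positivity)) _
    _ = ENNReal.ofReal ((γ : ℝ) ^ α) * (ENNReal.ofReal (((γ : ℝ) * R) ^ β) *
        (∫⁻ y in closedBall (X x₀) (γ * R), (‖u y‖₊ : ℝ≥0∞) ^ q) ^ (1 / q)) := by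
        rw [hRβ, ENNReal.ofReal_mul (by positivity), mul_assoc]
    _ ≤ ENNReal.ofReal ((γ : ℝ) ^ α) * morreyNorm n p q u := by
        gcongr
        exact le_iSup_of_le (X x₀) (le_iSup_of_le ((γ : ℝ) * R) (le_iSup_of_le hRpos le_rfl))

open NNReal in
/-- Morrey norms under volume-preserving bi-Lipschitz maps (Lemma 3.4). -/
theorem morrey_comp_volume_preserving (n : ℕ) (hn : 1 ≤ n) (p q : ℝ) (hq : 1 < q) (hqp : q ≤ p)
    (γ : ℝ≥0) (hγ : 1 ≤ γ)
    (X Xinv : EuclideanSpace ℝ (Fin n) → EuclideanSpace ℝ (Fin n))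
    (hbij : Function.Bijective X)
    (hmp : MeasurePreserving X (volume : Measure (EuclideanSpace ℝ (Fin n))) volume)
    (hinvl : Function.LeftInverse Xinv X) (hinvr : Function.RightInverse Xinv X)
    (hlip : LipschitzWith γ X) (hlip' : LipschitzWith γ Xinv)
    (u : EuclideanSpace ℝ (Fin n) → ℝ) (hu : MemMorrey n p q u) :
    MemMorrey n p q (u ∘ X) ∧
      ENNReal.ofReal ((γ : ℝ) ^ (-((n : ℝ) / q - (n : ℝ) / p))) * morreyNorm n p q u ≤
        morreyNorm n p q (u ∘ X) ∧
      morreyNorm n p q (u ∘ X) ≤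
        ENNReal.ofReal ((γ : ℝ) ^ ((n : ℝ) / q - (n : ℝ) / p)) * morreyNorm n p q u := by
  have hp : (0 : ℝ) < p := lt_of_lt_of_le (lt_trans one_pos hq) hqp
  have hγ0 : (0 : ℝ) < γ := lt_of_lt_of_le one_pos hγ
  -- homeomorph / measurable equiv
  let e : EuclideanSpace ℝ (Fin n) ≃ₜ EuclideanSpace ℝ (Fin n) :=
    ⟨⟨X, Xinv, hinvl, hinvr⟩, hlip.continuous, hlip'.continuous⟩
  have hembX : MeasurableEmbedding X := e.toMeasurableEquiv.measurableEmbedding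
  have hembXinv : MeasurableEmbedding Xinv := e.toMeasurableEquiv.symm.measurableEmbedding
  have hmpinv : MeasurePreserving Xinv (volume : Measure (EuclideanSpace ℝ (Fin n))) volume := by
    have := (MeasurePreserving.symm e.toMeasurableEquiv hmp)
    exact this
  have hupper := morrey_comp_aux n p q hq hqp hp γ hγ X hmp hembX hlip u
  have hlower' := morrey_comp_aux n p q hq hqp hp γ hγ Xinv hmpinv hembXinv hlip' (u ∘ X)
  have heq : (u ∘ X) ∘ Xinv = u := by
    funext x; simp [Function.comp, hinvr x]
  rw [heq] at hlower'
  set α : ℝ := (n : ℝ) / q - (n : ℝ) / p with hα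
  have hfin : morreyNorm n p q (u ∘ X) < ⊤ :=
    lt_of_le_of_lt hupper (ENNReal.mul_lt_top ENNReal.ofReal_lt_top hu.2)
  refine ⟨⟨hu.1.comp_quasiMeasurePreserving hmp.quasiMeasurePreserving, hfin⟩, ?_, hupper⟩
  calc ENNReal.ofReal ((γ : ℝ) ^ (-α)) * morreyNorm n p q u
      ≤ ENNReal.ofReal ((γ : ℝ) ^ (-α)) *
        (ENNReal.ofReal ((γ : ℝ) ^ α) * morreyNorm n p q (u ∘ X)) := by gcongr
    _ = morreyNorm n p q (u ∘ X) := by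
        rw [← mul_assoc, ← ENNReal.ofReal_mul (by positivity), ← Real.rpow_add hγ0]
        simp
end

section
/- Young inequality in Morrey spaces (used throughout Sections 3–4; Lemma 1.8 of Kozono–Yamazaki): Let n ≥ 1 and 1 ≤ q ≤ p < ∞. For every f ∈ L¹(ℝⁿ) and every u ∈ M_q^p(ℝⁿ), the convolution (f ∗ u)(x) = ∫_{ℝⁿ} f(x−y) u(y) dy is defined for almost every x ∈ ℝⁿ, belongs to M_q^p(ℝⁿ), and satisfies ‖f ∗ u‖_{M_q^p} ≤ ‖f‖_{L¹} ‖u‖_{M_q^p}. -/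
open MeasureTheory Metric Set ENNReal

section AuxMink


variable {α β : Type*} [MeasurableSpace α] [MeasurableSpace β]
  {μ : Measure α} {ν : Measure β}

lemma iSup_min_rpow (a : ℝ≥0∞) {q : ℝ} (hq : 1 ≤ q) :
    ⨆ N : ℕ, min a (N : ℝ≥0∞) ^ q = a ^ q := by
  have hq0 : (0:ℝ) < q := lt_of_lt_of_le one_pos hq
  refine le_antisymm (iSup_le fun N => ENNReal.rpow_le_rpow (min_le_left _ _) hq0.le) ?_
  by_cases ha : a = ∞
  · subst ha
    have h1 : ∀ N : ℕ, min (∞ : ℝ≥0∞) (N : ℝ≥0∞) = (N : ℝ≥0∞) := fun N => min_eq_right le_top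
    simp only [h1, ENNReal.top_rpow_of_pos hq0]
    have h2 : (∞ : ℝ≥0∞) = ⨆ N : ℕ, (N : ℝ≥0∞) := ENNReal.iSup_natCast.symm
    rw [h2]
    refine iSup_mono fun N => ?_
    rcases Nat.eq_zero_or_pos N with hN | hN
    · subst hN; simp
    · calc (N : ℝ≥0∞) = (N : ℝ≥0∞) ^ (1:ℝ) := (ENNReal.rpow_one _).symm
        _ ≤ (N : ℝ≥0∞) ^ q := ENNReal.rpow_le_rpow_of_exponent_le (by exact_mod_cast hN) hq
  · obtain ⟨N, hN⟩ := ENNReal.exists_nat_gt ha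
    exact le_iSup_of_le N (by rw [min_eq_left hN.le])

lemma trunc_est [IsFiniteMeasure μ] [SFinite ν] {q : ℝ} (hq1 : 1 < q)
    {F : α × β → ℝ≥0∞} (hF : Measurable F) (N : ℕ) :
    ∫⁻ x, min (∫⁻ y, F (x, y) ∂ν) (N : ℝ≥0∞) ^ q ∂μ ≤
      (∫⁻ y, (∫⁻ x, F (x, y) ^ q ∂μ) ^ (1 / q) ∂ν) ^ q := by
  have hq0 : (0:ℝ) < q := one_pos.trans hq1
  have hqne : q ≠ 0 := hq0.ne'
  have hrq : (q / (q - 1)).HolderConjugate q := (Real.HolderConjugate.conjExponent hq1).symm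
  have hinvr : 1 / (q / (q - 1)) = 1 - 1 / q := by
    rw [one_div_div, sub_div, div_self hqne]
  have hexp : (q - 1) * (q / (q - 1)) = q := by
    rw [mul_comm]; exact div_mul_cancel₀ q (by linarith)
  have hsub1 : (0:ℝ) ≤ q - 1 := by linarith
  have hsub2 : (0:ℝ) ≤ 1 - 1 / q := by
    have : 1 / q ≤ 1 := by
      rw [div_le_one hq0]; linarith
    linarith
  set I : α → ℝ≥0∞ := fun x => ∫⁻ y, F (x, y) ∂ν with hI
  set J : α → ℝ≥0∞ := fun x => min (I x) (N : ℝ≥0∞) with hJdef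
  have hImeas : Measurable I := hF.lintegral_prod_right'
  have hJ : Measurable J := hImeas.min measurable_const
  have hJle : ∀ x, J x ≤ (N : ℝ≥0∞) := fun x => min_le_right _ _
  show ∫⁻ x, J x ^ q ∂μ ≤ (∫⁻ y, (∫⁻ x, F (x, y) ^ q ∂μ) ^ (1 / q) ∂ν) ^ q
  set A : ℝ≥0∞ := ∫⁻ x, J x ^ q ∂μ with hA
  set B : ℝ≥0∞ := ∫⁻ y, (∫⁻ x, F (x, y) ^ q ∂μ) ^ (1 / q) ∂ν with hB
  have hAtop : A ≠ ∞ := by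
    refine ne_of_lt (lt_of_le_of_lt
      (lintegral_mono fun x => ENNReal.rpow_le_rpow (hJle x) hq0.le) ?_)
    rw [lintegral_const]
    exact ENNReal.mul_lt_top
      (ENNReal.rpow_lt_top_of_nonneg hq0.le (ENNReal.natCast_ne_top N)) (measure_lt_top μ _)
  have key : A ≤ A ^ (1 - 1/q) * B := by
    calc A ≤ ∫⁻ x, J x ^ (q - 1) * I x ∂μ := by
          refine lintegral_mono fun x => ?_
          calc J x ^ q = J x ^ (q - 1 + 1) := by rw [sub_add_cancel]
            _ = J x ^ (q - 1) * J x ^ (1:ℝ) :=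
                ENNReal.rpow_add_of_nonneg _ _ hsub1 zero_le_one
            _ = J x ^ (q - 1) * J x := by rw [ENNReal.rpow_one]
            _ ≤ J x ^ (q - 1) * I x := mul_le_mul_right (min_le_left _ _) _
      _ = ∫⁻ x, ∫⁻ y, J x ^ (q - 1) * F (x, y) ∂ν ∂μ := by
          refine lintegral_congr fun x => ?_
          rw [lintegral_const_mul _ (show Measurable fun y => F (x, y) from hF.comp measurable_prodMk_left)]
      _ = ∫⁻ y, ∫⁻ x, J x ^ (q - 1) * F (x, y) ∂μ ∂ν :=
          lintegral_lintegral_swap (((hJ.comp measurable_fst).pow_const _).mul hF).aemeasurable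
      _ ≤ ∫⁻ y, A ^ (1 - 1/q) * (∫⁻ x, F (x, y) ^ q ∂μ) ^ (1/q) ∂ν := by
          refine lintegral_mono fun y => ?_
          calc ∫⁻ x, J x ^ (q-1) * F (x, y) ∂μ
              ≤ (∫⁻ x, (J x ^ (q-1)) ^ (q / (q-1)) ∂μ) ^ (1/(q/(q-1))) *
                  (∫⁻ x, F (x, y) ^ q ∂μ) ^ (1/q) :=
                ENNReal.lintegral_mul_le_Lp_mul_Lq μ hrq ((hJ.pow_const _).aemeasurable)
                  ((show Measurable fun x => F (x, y) from
                    hF.comp measurable_prodMk_right).aemeasurable)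
            _ = A ^ (1 - 1/q) * (∫⁻ x, F (x, y) ^ q ∂μ) ^ (1/q) := by
                congr 1
                rw [hinvr]
                congr 1
                refine lintegral_congr fun x => ?_
                rw [← ENNReal.rpow_mul, hexp]
      _ = A ^ (1 - 1/q) * B :=
          lintegral_const_mul' _ _ (ENNReal.rpow_ne_top_of_nonneg hsub2 hAtop)
  by_cases hA0 : A = 0
  · rw [hA0]; exact zero_le
  · have hAq : A ^ (1/q) ≤ B := by
      have hc0 : A ^ (1 - 1/q) ≠ 0 :=
        (ENNReal.rpow_pos (pos_iff_ne_zero.2 hA0) hAtop).ne'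
      have hctop : A ^ (1 - 1/q) ≠ ∞ := ENNReal.rpow_ne_top_of_nonneg hsub2 hAtop
      rw [← ENNReal.mul_le_mul_iff_right hc0 hctop]
      calc A ^ (1 - 1/q) * A ^ (1/q) = A := by
            rw [← ENNReal.rpow_add_of_nonneg _ _ hsub2 (by positivity), sub_add_cancel,
              ENNReal.rpow_one]
        _ ≤ A ^ (1 - 1/q) * B := key
    calc A = (A ^ (1/q)) ^ q := by
          rw [← ENNReal.rpow_mul, one_div, inv_mul_cancel₀ hqne, ENNReal.rpow_one]
      _ ≤ B ^ q := ENNReal.rpow_le_rpow hAq hq0.le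

lemma minkowski_lintegral [IsFiniteMeasure μ] [SFinite ν] {q : ℝ} (hq : 1 ≤ q)
    {F : α × β → ℝ≥0∞} (hF : Measurable F) :
    (∫⁻ x, (∫⁻ y, F (x, y) ∂ν) ^ q ∂μ) ^ (1 / q) ≤
      ∫⁻ y, (∫⁻ x, F (x, y) ^ q ∂μ) ^ (1 / q) ∂ν := by
  have hq0 : (0:ℝ) < q := one_pos.trans_le hq
  rcases eq_or_lt_of_le hq with rfl | hq1
  · simp only [ENNReal.rpow_one, one_div_one]
    exact le_of_eq (lintegral_lintegral_swap hF.aemeasurable)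
  · have main : ∫⁻ x, (∫⁻ y, F (x, y) ∂ν) ^ q ∂μ ≤
        (∫⁻ y, (∫⁻ x, F (x, y) ^ q ∂μ) ^ (1 / q) ∂ν) ^ q := by
      calc ∫⁻ x, (∫⁻ y, F (x, y) ∂ν) ^ q ∂μ
          = ∫⁻ x, ⨆ N : ℕ, min (∫⁻ y, F (x, y) ∂ν) (N : ℝ≥0∞) ^ q ∂μ :=
            lintegral_congr fun x => (iSup_min_rpow _ hq).symm
        _ = ⨆ N : ℕ, ∫⁻ x, min (∫⁻ y, F (x, y) ∂ν) (N : ℝ≥0∞) ^ q ∂μ := by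
            refine lintegral_iSup
              (fun N => ((hF.lintegral_prod_right').min measurable_const).pow_const _) ?_
            intro i j hij x
            exact ENNReal.rpow_le_rpow (min_le_min le_rfl (by exact_mod_cast hij)) hq0.le
        _ ≤ (∫⁻ y, (∫⁻ x, F (x, y) ^ q ∂μ) ^ (1 / q) ∂ν) ^ q :=
            iSup_le fun N => trunc_est hq1 hF N
    calc (∫⁻ x, (∫⁻ y, F (x, y) ∂ν) ^ q ∂μ) ^ (1/q)
        ≤ ((∫⁻ y, (∫⁻ x, F (x, y) ^ q ∂μ) ^ (1 / q) ∂ν) ^ q) ^ (1/q) :=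
          ENNReal.rpow_le_rpow main (by positivity)
      _ = ∫⁻ y, (∫⁻ x, F (x, y) ^ q ∂μ) ^ (1 / q) ∂ν := by
          rw [← ENNReal.rpow_mul, mul_one_div, div_self hq0.ne', ENNReal.rpow_one]


end AuxMink

/-- Young inequality in Morrey spaces (Lemma 1.8 of Kozono–Yamazaki). -/
theorem morrey_young (n : ℕ) (hn : 1 ≤ n) (p q : ℝ) (hq : 1 ≤ q) (hqp : q ≤ p)
    (f u : EuclideanSpace ℝ (Fin n) → ℝ)
    (hf : Integrable f (volume : Measure (EuclideanSpace ℝ (Fin n))))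
    (hu : MemMorrey n p q u) :
    (∀ᵐ x ∂(volume : Measure (EuclideanSpace ℝ (Fin n))),
        Integrable (fun y => f (x - y) * u y) volume) ∧
    MemMorrey n p q (fun x => ∫ y, f (x - y) * u y) ∧
    morreyNorm n p q (fun x => ∫ y, f (x - y) * u y) ≤
      eLpNorm f 1 volume * morreyNorm n p q u := by
  have hq0 : (0:ℝ) < q := one_pos.trans_le hq
  have hum : AEStronglyMeasurable u (volume : Measure (EuclideanSpace ℝ (Fin n))) := hu.1
  have huM : morreyNorm n p q u < ⊤ := hu.2
  set f₀ : EuclideanSpace ℝ (Fin n) → ℝ := hf.1.mk f with hf₀def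
  have hf₀m : StronglyMeasurable f₀ := hf.1.stronglyMeasurable_mk
  have hff₀ : f =ᵐ[(volume : Measure (EuclideanSpace ℝ (Fin n)))] f₀ := hf.1.ae_eq_mk
  set u₀ : EuclideanSpace ℝ (Fin n) → ℝ := hum.mk u with hu₀def
  have hu₀m : StronglyMeasurable u₀ := hum.stronglyMeasurable_mk
  have huu₀ : u =ᵐ[(volume : Measure (EuclideanSpace ℝ (Fin n)))] u₀ := hum.ae_eq_mk
  -- pointwise equality of the convolution with its measurable version
  have hconv_eq : ∀ x : EuclideanSpace ℝ (Fin n),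
      (∫ y, f (x - y) * u y) = ∫ y, f₀ (x - y) * u₀ y := by
    intro x
    refine integral_congr_ae ?_
    have h1 : (fun y : EuclideanSpace ℝ (Fin n) => f (x - y))
        =ᵐ[(volume : Measure (EuclideanSpace ℝ (Fin n)))] fun y => f₀ (x - y) :=
      hff₀.comp_tendsto
        (Measure.measurePreserving_sub_left volume x).quasiMeasurePreserving.tendsto_ae
    exact h1.mul huu₀
  have hsubm : Measurable fun pr : (EuclideanSpace ℝ (Fin n)) × (EuclideanSpace ℝ (Fin n)) =>
      pr.1 - pr.2 := measurable_fst.sub measurable_snd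
  set Φ : (EuclideanSpace ℝ (Fin n)) × (EuclideanSpace ℝ (Fin n)) → ℝ≥0∞ :=
    fun pr => (‖f₀ (pr.1 - pr.2)‖₊ : ℝ≥0∞) * (‖u₀ pr.2‖₊ : ℝ≥0∞) with hΦdef
  have hΦm : Measurable Φ :=
    ((hf₀m.measurable.comp hsubm).nnnorm.coe_nnreal_ennreal).mul
      ((hu₀m.measurable.comp measurable_snd).nnnorm.coe_nnreal_ennreal)
  set g : EuclideanSpace ℝ (Fin n) → ℝ≥0∞ := fun x => ∫⁻ y, Φ (x, y) with hgdef
  have hgm : Measurable g := hΦm.lintegral_prod_right'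
  -- the convolution is pointwise dominated by `g`
  have hnorm_le : ∀ x : EuclideanSpace ℝ (Fin n),
      (‖∫ y, f (x - y) * u y‖₊ : ℝ≥0∞) ≤ g x := by
    intro x
    rw [hconv_eq x]
    refine le_trans (enorm_integral_le_lintegral_enorm _) (le_of_eq ?_)
    refine lintegral_congr fun y => ?_
    rw [enorm_mul]; rfl
  -- change of variables `z = x - y`
  have hg_eq : ∀ x : EuclideanSpace ℝ (Fin n),
      g x = ∫⁻ z, (‖f₀ z‖₊ : ℝ≥0∞) * (‖u₀ (x - z)‖₊ : ℝ≥0∞) := by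
    intro x
    have h := (Measure.measurePreserving_sub_left
        (volume : Measure (EuclideanSpace ℝ (Fin n))) x).lintegral_comp_emb
      (MeasurableEquiv.subLeft x).measurableEmbedding (fun y => Φ (x, y))
    rw [hgdef]
    simp only []
    rw [← h]
    refine lintegral_congr fun z => ?_
    show (‖f₀ (x - (x - z))‖₊ : ℝ≥0∞) * (‖u₀ (x - z)‖₊ : ℝ≥0∞) = _
    have hzz : x - (x - z) = z := by abel
    rw [hzz]
  -- translating balls
  have hball : ∀ (x₀ z : EuclideanSpace ℝ (Fin n)) (R : ℝ),
      (∫⁻ x in closedBall x₀ R, (‖u₀ (x - z)‖₊ : ℝ≥0∞) ^ q) =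
        ∫⁻ w in closedBall (x₀ - z) R, (‖u₀ w‖₊ : ℝ≥0∞) ^ q := by
    intro x₀ z R
    have h1 := (measurePreserving_sub_right
        (volume : Measure (EuclideanSpace ℝ (Fin n))) z).setLIntegral_comp_emb
      (MeasurableEquiv.subRight z).measurableEmbedding
      (fun w => (‖u₀ w‖₊ : ℝ≥0∞) ^ q) (closedBall x₀ R)
    have himg : (fun x : EuclideanSpace ℝ (Fin n) => x - z) '' closedBall x₀ R =
        closedBall (x₀ - z) R := by
      ext w
      simp only [mem_image, mem_closedBall]
      constructor
      · rintro ⟨x, hx, rfl⟩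
        rwa [dist_sub_right]
      · intro hw
        refine ⟨w + z, ?_, add_sub_cancel_right w z⟩
        have h2 : dist (w + z) x₀ = dist w (x₀ - z) := by
          rw [← dist_sub_right (w + z) x₀ z, add_sub_cancel_right]
        rwa [h2]
    rw [h1, himg]
  -- inner integrals are the same for `u` and `u₀`
  have hinner_u : ∀ (c : EuclideanSpace ℝ (Fin n)) (R : ℝ),
      (∫⁻ x in closedBall c R, (‖u₀ x‖₊ : ℝ≥0∞) ^ q) =
        ∫⁻ x in closedBall c R, (‖u x‖₊ : ℝ≥0∞) ^ q := by
    intro c R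
    refine lintegral_congr_ae ?_
    filter_upwards [ae_restrict_of_ae huu₀] with x hx
    rw [hx]
  have hT_le : ∀ (c : EuclideanSpace ℝ (Fin n)) (R : ℝ), 0 < R →
      ENNReal.ofReal (R ^ ((n:ℝ)/p - (n:ℝ)/q)) *
        (∫⁻ x in closedBall c R, (‖u₀ x‖₊ : ℝ≥0∞) ^ q) ^ (1/q) ≤ morreyNorm n p q u := by
    intro c R hR
    rw [hinner_u c R]
    rw [morreyNorm]
    refine le_trans ?_ (le_iSup _ c)
    refine le_trans ?_ (le_iSup _ R)
    exact le_iSup (fun _ : 0 < R => ENNReal.ofReal (R ^ ((n:ℝ)/p - (n:ℝ)/q)) *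
      (∫⁻ x in closedBall c R, (‖u x‖₊ : ℝ≥0∞) ^ q) ^ (1/q)) hR
  have hKM_ne : eLpNorm f 1 volume * morreyNorm n p q u ≠ ⊤ :=
    (ENNReal.mul_lt_top (memLp_one_iff_integrable.mpr hf).2 huM).ne
  -- the key Minkowski estimate
  have Est : ∀ (x₀ : EuclideanSpace ℝ (Fin n)) (R : ℝ), 0 < R →
      ENNReal.ofReal (R ^ ((n:ℝ)/p - (n:ℝ)/q)) *
        (∫⁻ x in closedBall x₀ R, g x ^ q) ^ (1/q) ≤
        eLpNorm f 1 volume * morreyNorm n p q u := by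
    intro x₀ R hR
    haveI : IsFiniteMeasure
        ((volume : Measure (EuclideanSpace ℝ (Fin n))).restrict (closedBall x₀ R)) :=
      ⟨by rw [Measure.restrict_apply_univ]; exact measure_closedBall_lt_top⟩
    set F : (EuclideanSpace ℝ (Fin n)) × (EuclideanSpace ℝ (Fin n)) → ℝ≥0∞ :=
      fun pr => (‖f₀ pr.2‖₊ : ℝ≥0∞) * (‖u₀ (pr.1 - pr.2)‖₊ : ℝ≥0∞) with hFdef
    have hFm : Measurable F :=
      ((hf₀m.measurable.comp measurable_snd).nnnorm.coe_nnreal_ennreal).mul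
        ((hu₀m.measurable.comp hsubm).nnnorm.coe_nnreal_ennreal)
    have hmink := minkowski_lintegral
      (μ := (volume : Measure (EuclideanSpace ℝ (Fin n))).restrict (closedBall x₀ R))
      (ν := (volume : Measure (EuclideanSpace ℝ (Fin n)))) hq hFm
    have hgx : ∀ x : EuclideanSpace ℝ (Fin n), (∫⁻ y, F (x, y)) = g x := by
      intro x
      rw [hg_eq x]
    simp only [hgx] at hmink
    have hRHS : ∀ z : EuclideanSpace ℝ (Fin n),
        (∫⁻ x in closedBall x₀ R, F (x, z) ^ q) ^ (1/q) =
          (‖f₀ z‖₊ : ℝ≥0∞) *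
            (∫⁻ x in closedBall (x₀ - z) R, (‖u₀ x‖₊ : ℝ≥0∞) ^ q) ^ (1/q) := by
      intro z
      have h1 : ∀ x : EuclideanSpace ℝ (Fin n), F (x, z) ^ q =
          (‖f₀ z‖₊ : ℝ≥0∞) ^ q * (‖u₀ (x - z)‖₊ : ℝ≥0∞) ^ q := fun x =>
        ENNReal.mul_rpow_of_nonneg _ _ hq0.le
      rw [lintegral_congr h1,
        lintegral_const_mul _ (show Measurable
          fun x : EuclideanSpace ℝ (Fin n) => (‖u₀ (x - z)‖₊ : ℝ≥0∞) ^ q from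
          ((hu₀m.measurable.comp
          (measurable_id.sub_const z)).nnnorm.coe_nnreal_ennreal).pow_const q),
        hball x₀ z R,
        ENNReal.mul_rpow_of_nonneg _ _ (by positivity : (0:ℝ) ≤ 1/q),
        ← ENNReal.rpow_mul, mul_one_div, div_self hq0.ne', ENNReal.rpow_one]
    calc ENNReal.ofReal (R ^ ((n:ℝ)/p - (n:ℝ)/q)) *
          (∫⁻ x in closedBall x₀ R, g x ^ q) ^ (1/q)
        ≤ ENNReal.ofReal (R ^ ((n:ℝ)/p - (n:ℝ)/q)) *
            ∫⁻ z, (∫⁻ x in closedBall x₀ R, F (x, z) ^ q) ^ (1/q) :=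
          mul_le_mul_right hmink _
      _ = ∫⁻ z, (‖f₀ z‖₊ : ℝ≥0∞) *
            (ENNReal.ofReal (R ^ ((n:ℝ)/p - (n:ℝ)/q)) *
              (∫⁻ x in closedBall (x₀ - z) R, (‖u₀ x‖₊ : ℝ≥0∞) ^ q) ^ (1/q)) := by
          rw [← lintegral_const_mul' _ _ ENNReal.ofReal_ne_top]
          refine lintegral_congr fun z => ?_
          rw [hRHS z]; ring
      _ ≤ ∫⁻ z, (‖f₀ z‖₊ : ℝ≥0∞) * morreyNorm n p q u :=
          lintegral_mono fun z => mul_le_mul_right (hT_le _ R hR) _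
      _ = (∫⁻ z, (‖f₀ z‖₊ : ℝ≥0∞)) * morreyNorm n p q u :=
          lintegral_mul_const' _ _ huM.ne
      _ = eLpNorm f 1 volume * morreyNorm n p q u := by
          congr 1
          rw [eLpNorm_one_eq_lintegral_enorm]
          refine (lintegral_congr_ae ?_).symm
          filter_upwards [hff₀] with x hx
          rw [hx]; rfl
  -- bound on the Morrey norm of the convolution
  have hnormbound : morreyNorm n p q (fun x => ∫ y, f (x - y) * u y) ≤
      eLpNorm f 1 volume * morreyNorm n p q u := by
    rw [morreyNorm]
    refine iSup_le fun x₀ => iSup_le fun R => iSup_le fun hR => ?_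
    refine le_trans ?_ (Est x₀ R hR)
    refine mul_le_mul_right (ENNReal.rpow_le_rpow ?_ (by positivity)) _
    exact lintegral_mono fun x => ENNReal.rpow_le_rpow (hnorm_le x) hq0.le
  -- strong measurability of the convolution
  have hhm : AEStronglyMeasurable (fun x => ∫ y, f (x - y) * u y)
      (volume : Measure (EuclideanSpace ℝ (Fin n))) := by
    have hΨ : AEStronglyMeasurable
        (fun pr : (EuclideanSpace ℝ (Fin n)) × (EuclideanSpace ℝ (Fin n)) =>
          f₀ (pr.1 - pr.2) * u₀ pr.2)
        (((volume : Measure (EuclideanSpace ℝ (Fin n)))).prod volume) :=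
      ((hf₀m.comp_measurable hsubm).mul
        (hu₀m.comp_measurable measurable_snd)).aestronglyMeasurable
    refine hΨ.integral_prod_right'.congr ?_
    exact Filter.Eventually.of_forall fun x => (hconv_eq x).symm
  -- a.e. finiteness of g
  have hgfin : ∀ᵐ x ∂(volume : Measure (EuclideanSpace ℝ (Fin n))), g x < ⊤ := by
    have hball_fin : ∀ N : ℕ,
        (volume : Measure (EuclideanSpace ℝ (Fin n)))
          ({x | g x = ⊤} ∩ closedBall 0 ((N:ℝ)+1)) = 0 := by
      intro N
      have hRpos : (0:ℝ) < (N:ℝ) + 1 := by positivity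
      have h1 : (∫⁻ x in closedBall (0 : EuclideanSpace ℝ (Fin n)) ((N:ℝ)+1), g x ^ q) ≠ ⊤ := by
        intro htop
        have hest := Est 0 ((N:ℝ)+1) hRpos
        rw [htop] at hest
        have hc : ENNReal.ofReal (((N:ℝ)+1) ^ ((n:ℝ)/p - (n:ℝ)/q)) ≠ 0 :=
          (ENNReal.ofReal_pos.mpr (Real.rpow_pos_of_pos hRpos _)).ne'
        rw [ENNReal.top_rpow_of_pos (by positivity), ENNReal.mul_top hc] at hest
        exact hKM_ne (top_le_iff.mp hest)
      have h2 : ∀ᵐ x ∂((volume : Measure (EuclideanSpace ℝ (Fin n))).restrict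
          (closedBall 0 ((N:ℝ)+1))), g x ^ q < ⊤ :=
        ae_lt_top' ((hgm.pow_const q).aemeasurable) h1
      have h3 : ∀ᵐ x ∂((volume : Measure (EuclideanSpace ℝ (Fin n))).restrict
          (closedBall 0 ((N:ℝ)+1))), g x < ⊤ := by
        filter_upwards [h2] with x hx
        by_contra hcon
        rw [not_lt, top_le_iff] at hcon
        rw [hcon, ENNReal.top_rpow_of_pos hq0] at hx
        exact absurd hx (lt_irrefl _)
      have hmeas : MeasurableSet {x : EuclideanSpace ℝ (Fin n) | g x = ⊤} :=
        hgm (measurableSet_singleton ⊤)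
      rw [ae_iff] at h3
      have hset : {a : EuclideanSpace ℝ (Fin n) | ¬ g a < ⊤} = {x | g x = ⊤} := by
        ext a; simp [lt_top_iff_ne_top]
      rwa [hset, Measure.restrict_apply hmeas] at h3
    have hsub : {x : EuclideanSpace ℝ (Fin n) | g x = ⊤} ⊆
        ⋃ N : ℕ, {x | g x = ⊤} ∩ closedBall 0 ((N:ℝ)+1) := by
      intro x hx
      obtain ⟨N, hN⟩ := exists_nat_ge ‖x‖
      refine mem_iUnion.2 ⟨N, hx, ?_⟩
      rw [mem_closedBall, dist_zero_right]
      linarith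
    have hnull : (volume : Measure (EuclideanSpace ℝ (Fin n))) {x | g x = ⊤} = 0 :=
      measure_mono_null hsub (measure_iUnion_null fun N => hball_fin N)
    rw [ae_iff]
    have hset : {a : EuclideanSpace ℝ (Fin n) | ¬ g a < ⊤} = {x | g x = ⊤} := by
      ext a; simp [lt_top_iff_ne_top]
    rwa [hset]
  -- a.e. integrability of the convolution integrand
  have part1 : ∀ᵐ x ∂(volume : Measure (EuclideanSpace ℝ (Fin n))),
      Integrable (fun y => f (x - y) * u y) volume := by
    filter_upwards [hgfin] with x hx
    have hint0 : Integrable (fun y => f₀ (x - y) * u₀ y)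
        (volume : Measure (EuclideanSpace ℝ (Fin n))) := by
      constructor
      · exact ((hf₀m.comp_measurable (measurable_const.sub measurable_id)).mul
          hu₀m).aestronglyMeasurable
      · show (∫⁻ y, (‖f₀ (x - y) * u₀ y‖₊ : ℝ≥0∞)) < ⊤
        have : (∫⁻ y, (‖f₀ (x - y) * u₀ y‖₊ : ℝ≥0∞)) = g x := by
          refine lintegral_congr fun y => ?_
          rw [nnnorm_mul, ENNReal.coe_mul]
        rw [this]; exact hx
    refine hint0.congr ?_
    have h1 : (fun y : EuclideanSpace ℝ (Fin n) => f₀ (x - y))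
        =ᵐ[(volume : Measure (EuclideanSpace ℝ (Fin n)))] fun y => f (x - y) :=
      hff₀.symm.comp_tendsto
        (Measure.measurePreserving_sub_left volume x).quasiMeasurePreserving.tendsto_ae
    exact h1.mul huu₀.symm
  exact ⟨part1, ⟨hhm, lt_of_le_of_lt hnormbound (lt_top_iff_ne_top.2 hKM_ne)⟩, hnormbound⟩
end
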